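/- arXiv:2112.15534 — 4 statements merged into one kernel-verified Lean document; each statement's English description precedes it below -/
import Mathlib

section
/- For every distribution function F and all integers k,n ≥ 1, the probability p_{k,n}^{(F)} that the first vector is a maximum satisfies p_{k,n}^{(F)} ≤ p_{k,n}^{(U)}, where p_{k,n}^{(U)} is the corresponding probability when the coordinates are uniformly distributed on [0,1] (equivalently, when the coordinate distribution is any continuous distribution). -/
open MeasureTheory ProbabilityTheory Filter

/-- `X i` is a (strong) maximum, with respect to the coordinatewise product order, among
the sample `X 0, …, X (n-1)` of vectors of dimension `k`. -/
def IsParetoMax {Ω : Type*} (X : ℕ → ℕ → Ω → ℝ) (k n i : ℕ) (ω : Ω) : Prop :=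
  ∀ j < n, j ≠ i → ¬ (∀ m < k, X i m ω ≤ X j m ω)

/-!
Quantile coupling. If `G` is the generalized inverse of the distribution function `F`, then
`G (U i j)` is an i.i.d. array with marginal `F`, so the probability that its first vector is
maximal is `p_{k,n}^{(F)}`. Since `G` is monotone on `(0, 1)`, where the uniform coordinates
lie almost surely, every domination `U 0 ⪯ U j` survives under `G`; hence the first vector of
`G ∘ U` can only be maximal when the first vector of `U` is.
-/

open Topology Set

/-- Taken in `EReal` so that it is monotone on all of `ℝ`, hence measurable; `quantile` takes
junk values outside `(0, 1)`. -/
noncomputable def quantileE (F : ℝ → ℝ) (v : ℝ) : EReal :=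
  sInf ((↑) '' {x : ℝ | v ≤ F x})

noncomputable def quantile (F : ℝ → ℝ) (v : ℝ) : ℝ :=
  (quantileE F v).toReal

lemma monotone_quantileE (F : ℝ → ℝ) : Monotone (quantileE F) :=
  fun _ _ huv => sInf_le_sInf (image_mono fun _ hx => huv.trans hx)

lemma measurable_quantile (F : ℝ → ℝ) : Measurable (quantile F) :=
  measurable_ereal_toReal.comp (monotone_quantileE F).measurable

section

variable {F : ℝ → ℝ} {v : ℝ}

lemma quantileE_ne_top (hF1 : Tendsto F atTop (𝓝 1)) (hv : v < 1) : quantileE F v ≠ ⊤ := by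
  obtain ⟨x, hx⟩ := (hF1.eventually (eventually_gt_nhds hv)).exists
  exact ne_top_of_le_ne_top (EReal.coe_ne_top x) (sInf_le ⟨x, hx.le, rfl⟩)

lemma quantileE_ne_bot (hF : Monotone F) (hF0 : Tendsto F atBot (𝓝 0)) (hv : 0 < v) :
    quantileE F v ≠ ⊥ := by
  obtain ⟨x, hx⟩ := (hF0.eventually (eventually_lt_nhds hv)).exists
  refine ne_bot_of_le_ne_bot (EReal.coe_ne_bot x) (le_sInf ?_)
  rintro _ ⟨y, hy, rfl⟩
  exact EReal.coe_le_coe_iff.mpr (hF.reflect_lt (hx.trans_le hy)).le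

lemma monotoneOn_quantile (hF : Monotone F) (hF0 : Tendsto F atBot (𝓝 0))
    (hF1 : Tendsto F atTop (𝓝 1)) : MonotoneOn (quantile F) (Ioo 0 1) :=
  fun _ hu _ hv huv => EReal.toReal_le_toReal (monotone_quantileE F huv)
    (quantileE_ne_bot hF hF0 hu.1) (quantileE_ne_top hF1 hv.2)

end

lemma quantile_le_iff (F : StieltjesFunction ℝ) (hF0 : Tendsto F atBot (𝓝 0))
    (hF1 : Tendsto F atTop (𝓝 1)) {v : ℝ} (hv : v ∈ Ioo 0 1) (x : ℝ) :
    quantile F v ≤ x ↔ v ≤ F x := by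
  have hcoe : (quantile F v : EReal) = quantileE F v :=
    EReal.coe_toReal (quantileE_ne_top hF1 hv.2) (quantileE_ne_bot F.mono hF0 hv.1)
  constructor
  · intro hx
    suffices v ≤ F (quantile F v) from this.trans (F.mono hx)
    have hright : ∀ᶠ y in 𝓝[>] quantile F v, v ≤ F y := by
      filter_upwards [self_mem_nhdsWithin] with y hy
      obtain ⟨_, ⟨r, hr, rfl⟩, hry⟩ :=
        sInf_lt_iff.mp (hcoe ▸ EReal.coe_lt_coe_iff.mpr hy : quantileE F v < y)
      exact hr.trans (F.mono (EReal.coe_lt_coe_iff.mp hry).le)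
    exact ge_of_tendsto ((F.right_continuous _).tendsto.mono_left
      (nhdsWithin_mono _ Ioi_subset_Ici_self)) hright
  · intro hx
    exact EReal.coe_le_coe_iff.mp (hcoe ▸ sInf_le ⟨x, hx, rfl⟩)

lemma volume_Iic_inter_Ioo_zero_one {c : ℝ} (hc : c ∈ Icc 0 1) :
    volume (Iic c ∩ Ioo 0 1) = ENNReal.ofReal c := by
  refine le_antisymm ?_ ?_
  · calc volume (Iic c ∩ Ioo 0 1) ≤ volume (Ioc 0 c) :=
          measure_mono fun v hv => ⟨hv.2.1, hv.1⟩
      _ = ENNReal.ofReal c := by simp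
  · calc ENNReal.ofReal c = volume (Ioo 0 c) := by simp
      _ ≤ volume (Iic c ∩ Ioo 0 1) :=
          measure_mono fun v hv => ⟨hv.2.le, hv.1, hv.2.trans_le hc.2⟩

lemma hasLaw_quantile (F : StieltjesFunction ℝ) (hF0 : Tendsto F atBot (𝓝 0))
    (hF1 : Tendsto F atTop (𝓝 1)) :
    HasLaw (quantile F) F.measure (volume.restrict (Icc 0 1)) where
  aemeasurable := (measurable_quantile F).aemeasurable
  map_eq := by
    refine Measure.ext_of_Iic _ _ fun x => ?_
    have hpre : quantile F ⁻¹' Iic x ∩ Ioo 0 1 = Iic (F x) ∩ Ioo 0 1 := by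
      ext v
      simp only [mem_inter_iff, mem_preimage, mem_Iic]
      exact and_congr_left (quantile_le_iff F hF0 hF1 · x)
    rw [Measure.map_apply (measurable_quantile F) measurableSet_Iic,
      Measure.restrict_congr_set Ioo_ae_eq_Icc.symm,
      Measure.restrict_apply (measurable_quantile F measurableSet_Iic), hpre,
      volume_Iic_inter_Ioo_zero_one ⟨F.mono.le_of_tendsto hF0 x, F.mono.ge_of_tendsto hF1 x⟩,
      F.measure_Iic hF0, sub_zero]

lemma ae_restrict_Icc_mem_Ioo : ∀ᵐ v ∂volume.restrict (Icc (0 : ℝ) 1), v ∈ Ioo 0 1 := by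
  rw [Measure.restrict_congr_set Ioo_ae_eq_Icc.symm]
  exact ae_restrict_mem measurableSet_Ioo

lemma IsParetoMax.of_monotoneOn {Ω : Type*} {Z : ℕ → ℕ → Ω → ℝ} {f : ℝ → ℝ} {s : Set ℝ}
    {k n i : ℕ} {ω : Ω} (hf : MonotoneOn f s) (hZ : ∀ j m, Z j m ω ∈ s)
    (h : IsParetoMax (fun j m ω => f (Z j m ω)) k n i ω) : IsParetoMax Z k n i ω :=
  fun j hj hji hle => h j hj hji fun m hm => hf (hZ i m) (hZ j m) (hle m hm)

lemma measurableSet_isParetoMax (k n i : ℕ) :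
    MeasurableSet {g : ℕ × ℕ → ℝ | IsParetoMax (fun j m g => g (j, m)) k n i g} := by
  simp only [IsParetoMax, ofPred_forall]
  measurability

lemma ProbabilityTheory.iIndepFun.hasLaw_infinitePi_of_countable {ι Ω : Type*} [Countable ι]
    [MeasurableSpace Ω] {P : Measure Ω} {𝓧 : ι → Type*} [∀ i, MeasurableSpace (𝓧 i)]
    {X : Π i, Ω → 𝓧 i} {μ : Π i, Measure (𝓧 i)} (h : iIndepFun X P)
    (hX : ∀ i, HasLaw (X i) (μ i) P) :
    HasLaw (fun ω i => X i ω) (Measure.infinitePi μ) P :=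
  h.hasLaw_infinitePi hX (aemeasurable_pi_iff.2 fun i => (hX i).aemeasurable)

theorem stmt_4_general {Ω₁ Ω₂ : Type*} [MeasurableSpace Ω₁] [MeasurableSpace Ω₂]
    (P₁ : Measure Ω₁) [IsProbabilityMeasure P₁] (P₂ : Measure Ω₂) [IsProbabilityMeasure P₂]
    (X : ℕ → ℕ → Ω₁ → ℝ) (U : ℕ → ℕ → Ω₂ → ℝ)
    (hXindep : iIndepFun (fun q : ℕ × ℕ => X q.1 q.2) P₁)
    (hXident : ∀ i j, IdentDistrib (X i j) (X 0 0) P₁ P₁)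
    (hUindep : iIndepFun (fun q : ℕ × ℕ => U q.1 q.2) P₂)
    (hUunif : ∀ i j, Measure.map (U i j) P₂ = volume.restrict (Set.Icc (0 : ℝ) 1))
    (k n : ℕ) :
    P₁ {ω | IsParetoMax X k n 0 ω} ≤ P₂ {ω | IsParetoMax U k n 0 ω} := by
  set μ := P₁.map (X 0 0)
  have : IsProbabilityMeasure μ := Measure.isProbabilityMeasure_map (hXident 0 0).aemeasurable_fst
  set G := quantile (cdf μ)
  have hX (i j : ℕ) : HasLaw (X i j) μ P₁ :=
    (hXident i j).symm.hasLaw ⟨(hXident 0 0).aemeasurable_fst, rfl⟩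
  have hU (i j : ℕ) : HasLaw (U i j) (volume.restrict (Icc 0 1)) P₂ :=
    ⟨.of_map_ne_zero (by simp [hUunif]), hUunif i j⟩
  have hGU (i j : ℕ) : HasLaw (fun ω => G (U i j ω)) μ P₂ := by
    simpa only [measure_cdf] using
      (hasLaw_quantile (cdf μ) (tendsto_cdf_atBot μ) (tendsto_cdf_atTop μ)).fun_comp (hU i j)
  have hUIoo : ∀ᵐ ω ∂P₂, ∀ i j, U i j ω ∈ Ioo 0 1 :=
    ae_all_iff.2 fun i => ae_all_iff.2 fun j =>
      ae_of_ae_map (hU i j).aemeasurable ((hU i j).map_eq ▸ ae_restrict_Icc_mem_Ioo)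
  calc P₁ {ω | IsParetoMax X k n 0 ω}
      = Measure.infinitePi (fun _ => μ) {g | IsParetoMax (fun j m g => g (j, m)) k n 0 g} :=
        (hXindep.hasLaw_infinitePi_of_countable fun q => hX q.1 q.2).measure_eq
          (measurableSet_isParetoMax k n 0)
    _ = P₂ {ω | IsParetoMax (fun i j ω => G (U i j ω)) k n 0 ω} :=
        (((hUindep.comp (fun _ => G) fun _ => measurable_quantile _).hasLaw_infinitePi_of_countable
          fun q => hGU q.1 q.2).measure_eq (measurableSet_isParetoMax k n 0)).symm
    _ ≤ P₂ {ω | IsParetoMax U k n 0 ω} := measure_mono_ae <| by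
        filter_upwards [hUIoo] with ω hω
        exact IsParetoMax.of_monotoneOn (monotoneOn_quantile (monotone_cdf μ)
          (tendsto_cdf_atBot μ) (tendsto_cdf_atTop μ)) hω

/-- for every distribution `F` of the iid coordinates (array `X`), the probability
`p_{k,n}^{(F)}` that the first vector is a maximum is at most the corresponding probability
`p_{k,n}^{(U)}` for an iid array `U` of coordinates uniformly distributed on `[0,1]`. -/
theorem stmt_4 {Ω₁ Ω₂ : Type*} [MeasurableSpace Ω₁] [MeasurableSpace Ω₂]
    (P₁ : Measure Ω₁) [IsProbabilityMeasure P₁] (P₂ : Measure Ω₂) [IsProbabilityMeasure P₂]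
    (X : ℕ → ℕ → Ω₁ → ℝ) (U : ℕ → ℕ → Ω₂ → ℝ)
    (hXmeas : ∀ i j, Measurable (X i j))
    (hXindep : iIndepFun (fun q : ℕ × ℕ => X q.1 q.2) P₁)
    (hXident : ∀ i j, IdentDistrib (X i j) (X 0 0) P₁ P₁)
    (hUmeas : ∀ i j, Measurable (U i j))
    (hUindep : iIndepFun (fun q : ℕ × ℕ => U q.1 q.2) P₂)
    (hUunif : ∀ i j, Measure.map (U i j) P₂ = volume.restrict (Set.Icc (0 : ℝ) 1))
    (k n : ℕ) (hk : 1 ≤ k) (hn : 1 ≤ n) :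
    P₁ {ω | IsParetoMax X k n 0 ω} ≤ P₂ {ω | IsParetoMax U k n 0 ω} :=
  stmt_4_general P₁ P₂ X U hXindep hXident hUindep hUunif k n
end

section
/- Let the coordinates X_{ij} be i.i.d. Bernoulli(p) random variables for some p ∈ (0,1). Then for all integers k ≥ 1 and n ≥ 1, the probability that the first vector is a (strong) maximum is given exactly by p_{k,n}^{(p)} = Σ_{i=0}^{k} C(k,i) p^i (1−p)^{k−i} (1 − p^i)^{n−1}. -/
open MeasureTheory ProbabilityTheory Filter

/-!
Condition on the 0/1 pattern `S ⊆ {1, …, k}` of the first vector, which has probability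
`p ^ |S| * (1 - p) ^ (k - |S|)`. Given that pattern, the vector `X_j` dominates the first one
exactly when it has ones on all of `S`, an event of probability `p ^ |S|` depending on row `j`
only; since the rows are independent, none of the other `n - 1` rows dominates with probability
`(1 - p ^ |S|) ^ (n - 1)`. Grouping the patterns by size gives the binomial sum.
-/

open Finset

namespace ProbabilityTheory

variable {Ω : Type*} [MeasurableSpace Ω] {P : Measure Ω}

lemma iIndepFun.curry [IsProbabilityMeasure P] {ι κ 𝓧 : Type*} [MeasurableSpace 𝓧]
    {X : ι → κ → Ω → 𝓧} (mX : ∀ i j, Measurable (X i j))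
    (h : iIndepFun (fun q : ι × κ => X q.1 q.2) P) :
    iIndepFun (fun i ω j => X i j ω) P := by
  have _ i j := Measure.isProbabilityMeasure_map (μ := P) (mX i j).aemeasurable
  have hrow i : P.map (fun ω j => X i j ω) = Measure.infinitePi fun j => P.map (X i j) :=
    (h.precomp (Prod.mk_right_injective i)).map_fun_eq_infinitePi_map fun j => mX i j
  have hall : P.map (fun ω (q : ι × κ) => X q.1 q.2 ω)
      = Measure.infinitePi fun q : ι × κ => P.map (X q.1 q.2) :=
    h.map_fun_eq_infinitePi_map fun q : ι × κ => mX q.1 q.2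
  rw [iIndepFun_iff_map_fun_eq_infinitePi_map fun i => measurable_pi_lambda _ (mX i)]
  simp_rw [hrow]
  rw [← Measure.infinitePi_map_curry (fun i j => P.map (X i j)), ← hall,
    Measure.map_map (by fun_prop) (by fun_prop)]
  rfl

lemma iIndepFun.measureReal_inter_preimage_eq_mul {ι β : Type*} [MeasurableSpace β]
    {Y : ι → Ω → β} (hY : iIndepFun Y P) (S : Finset ι) {s : ι → Set β}
    (hs : ∀ i ∈ S, MeasurableSet (s i)) :
    P.real (⋂ i ∈ S, Y i ⁻¹' s i) = ∏ i ∈ S, P.real (Y i ⁻¹' s i) := by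
  simp only [measureReal_def, hY.measure_inter_preimage_eq_mul S hs, ENNReal.toReal_prod]

lemma iIndepFun.measureReal_forall_not_le_eq_sum [IsProbabilityMeasure P] {ι β : Type*}
    [MeasurableSpace β] [MeasurableSingletonClass β] [Preorder β]
    (hIci : ∀ x : β, MeasurableSet (Set.Ici x)) {Y : ι → Ω → β} (hY : iIndepFun Y P)
    (mY : ∀ i, Measurable (Y i)) {i : ι} {V : Finset β} (hV : ∀ ω, Y i ω ∈ V)
    {J : Finset ι} (hiJ : i ∉ J) :
    P.real {ω | ∀ j ∈ J, ¬ Y i ω ≤ Y j ω}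
      = ∑ x ∈ V, P.real (Y i ⁻¹' {x})
          * ∏ j ∈ J, (1 - P.real (Y j ⁻¹' Set.Ici x)) := by
  classical
  -- the piece `Y i = x, ∀ j ∈ J, Y j ∉ Ici x` as one family of preimages, to apply independence
  let s (x : β) : ι → Set β := Function.update (fun _ => (Set.Ici x)ᶜ) i {x}
  have hs_i x : s x i = {x} := Function.update_self ..
  have hs_ne {x j} (hj : j ∈ J) : s x j = (Set.Ici x)ᶜ :=
    Function.update_of_ne (ne_of_mem_of_not_mem hj hiJ) _ _
  have hs x : ∀ j ∈ insert i J, MeasurableSet (s x j) := by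
    refine forall_mem_insert _ _ _ |>.2 ⟨?_, fun j hj => ?_⟩
    · rw [hs_i]; exact measurableSet_singleton x
    · rw [hs_ne hj]; exact (hIci x).compl
  have hpiece x : ⋂ j ∈ insert i J, Y j ⁻¹' s x j
      = {ω | Y i ω = x ∧ ∀ j ∈ J, ¬ Y i ω ≤ Y j ω} := by
    ext ω
    simp +contextual [s, hs_ne]
  have hdecomp :
      {ω | ∀ j ∈ J, ¬ Y i ω ≤ Y j ω} = ⋃ x ∈ V, ⋂ j ∈ insert i J, Y j ⁻¹' s x j := by
    ext ω
    simp only [hpiece, Set.mem_iUnion, Set.mem_ofPred_eq, exists_prop]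
    exact ⟨fun h => ⟨Y i ω, hV ω, rfl, h⟩, fun ⟨x, _, _, h⟩ => h⟩
  rw [hdecomp, measureReal_biUnion_finset]
  · refine sum_congr rfl fun x _ => ?_
    rw [hY.measureReal_inter_preimage_eq_mul _ (hs x), prod_insert hiJ]
    refine congrArg₂ _ (by rw [hs_i]) (prod_congr rfl fun j hj => ?_)
    rw [hs_ne hj, Set.preimage_compl, probReal_compl_eq_one_sub (mY j (hIci x))]
  · intro x _ y _ hxy
    simp only [Function.onFun, hpiece, Set.disjoint_left]
    exact fun ω hx hy => hxy (hx.1.symm.trans hy.1)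
  · exact fun x _ => measurableSet_biInter _ fun j hj => mY j (hs x j hj)

lemma measureReal_preimage_zero_of_zero_or_one [IsProbabilityMeasure P] {W : Ω → ℝ}
    (mW : Measurable W) (hW : ∀ ω, W ω = 0 ∨ W ω = 1) :
    P.real (W ⁻¹' {0}) = 1 - P.real (W ⁻¹' {1}) := by
  have hcompl : W ⁻¹' {0} = (W ⁻¹' {1})ᶜ := by
    ext ω
    rcases hW ω with h | h <;> simp [h]
  rw [hcompl, probReal_compl_eq_one_sub (mW (measurableSet_singleton 1))]

variable {κ : Type*} {Z : κ → Ω → ℝ} {p : ℝ}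

lemma iIndepFun.measureReal_preimage_indicator [IsProbabilityMeasure P] [Fintype κ]
    [DecidableEq κ] (hZ : iIndepFun Z P)
    (mZ : ∀ m, Measurable (Z m)) (hval : ∀ m ω, Z m ω = 0 ∨ Z m ω = 1)
    (hp : ∀ m, P.real (Z m ⁻¹' {1}) = p) (S : Finset κ) :
    P.real ((fun ω m => Z m ω) ⁻¹' {(S : Set κ).indicator 1})
      = p ^ #S * (1 - p) ^ (Fintype.card κ - #S) := by
  have hset : (fun ω m => Z m ω) ⁻¹' {(S : Set κ).indicator 1}
      = ⋂ m ∈ univ, Z m ⁻¹' {(S : Set κ).indicator 1 m} := by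
    ext ω
    simp [funext_iff]
  rw [hset, hZ.measureReal_inter_preimage_eq_mul _ fun m _ => measurableSet_singleton _,
    ← prod_mul_prod_compl S, ← card_compl]
  congr 1
  · rw [← prod_const]
    refine prod_congr rfl fun m hm => ?_
    rw [Set.indicator_of_mem (mem_coe.2 hm), Pi.one_apply, hp]
  · rw [← prod_const]
    refine prod_congr rfl fun m hm => ?_
    rw [Set.indicator_of_notMem (by simpa using hm), measureReal_preimage_zero_of_zero_or_one
      (mZ m) (hval m), hp]

lemma iIndepFun.measureReal_preimage_Ici_indicator (hZ : iIndepFun Z P)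
    (hval : ∀ m ω, Z m ω = 0 ∨ Z m ω = 1)
    (hp : ∀ m, P.real (Z m ⁻¹' {1}) = p) (S : Finset κ) :
    P.real ((fun ω m => Z m ω) ⁻¹' Set.Ici ((S : Set κ).indicator 1)) = p ^ #S := by
  have hset : (fun ω m => Z m ω) ⁻¹' Set.Ici ((S : Set κ).indicator 1)
      = ⋂ m ∈ S, Z m ⁻¹' {1} := by
    ext ω
    simp only [Set.mem_preimage, Set.mem_Ici, Pi.le_def, Set.mem_iInter, Set.mem_singleton_iff]
    refine forall_congr' fun m => ?_
    by_cases hm : m ∈ S <;> rcases hval m ω with h | h <;> simp [hm, h]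
  rw [hset, hZ.measureReal_inter_preimage_eq_mul _ fun m _ => measurableSet_singleton _,
    prod_congr rfl fun m _ => hp m, prod_const]

end ProbabilityTheory

lemma sum_finset_fin_apply_card {R : Type*} [CommSemiring R] (k : ℕ) (f : ℕ → R) :
    ∑ S : Finset (Fin k), f #S = ∑ i ∈ range (k + 1), k.choose i * f i := by
  simp only [← powerset_univ, sum_powerset_apply_card, card_univ, Fintype.card_fin, nsmul_eq_mul]

lemma iIndepFun_rows_fin {Ω : Type*} [MeasurableSpace Ω] {P : Measure Ω} [IsProbabilityMeasure P]
    {X : ℕ → ℕ → Ω → ℝ} (hmeas : ∀ i j, Measurable (X i j))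
    (hindep : iIndepFun (fun q : ℕ × ℕ => X q.1 q.2) P) (k : ℕ) :
    iIndepFun (fun j ω (m : Fin k) => X j m ω) P :=
  iIndepFun.curry (fun j m => hmeas j m) <|
    hindep.precomp (g := Prod.map id Fin.val) (Function.injective_id.prodMap Fin.val_injective)

lemma exists_finset_indicator_eq_of_zero_or_one {κ : Type*} [Fintype κ] {y : κ → ℝ}
    (hy : ∀ m, y m = 0 ∨ y m = 1) : ∃ S : Finset κ, (S : Set κ).indicator 1 = y := by
  classical
  refine ⟨univ.filter (y · = 1), funext fun m => ?_⟩
  rcases hy m with h | h <;> simp [h]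

lemma isParetoMax_zero_iff {Ω : Type*} {X : ℕ → ℕ → Ω → ℝ} {k n : ℕ} {ω : Ω} :
    IsParetoMax X k n 0 ω
      ↔ ∀ j ∈ Ico 1 n, ¬ (fun m : Fin k => X 0 m ω) ≤ fun m : Fin k => X j m ω := by
  simp only [IsParetoMax, Pi.le_def, Fin.forall_iff, mem_Ico]
  exact ⟨fun h j hj => h j hj.2 (by omega), fun h j hj h0 => h j ⟨by omega, hj⟩⟩

theorem stmt_13_general {Ω : Type*} [MeasurableSpace Ω] (P : Measure Ω) [IsProbabilityMeasure P]
    (p : ℝ) (hp : p ∈ Set.Ioo (0 : ℝ) 1)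
    (X : ℕ → ℕ → Ω → ℝ)
    (hmeas : ∀ i j, Measurable (X i j))
    (hindep : iIndepFun (fun q : ℕ × ℕ => X q.1 q.2) P)
    (hval : ∀ i j ω, X i j ω = 0 ∨ X i j ω = 1)
    (hp1 : ∀ i j, P {ω | X i j ω = 1} = ENNReal.ofReal p)
    (k n : ℕ) :
    (P {ω | IsParetoMax X k n 0 ω}).toReal
      = ∑ i ∈ Finset.range (k + 1),
          (k.choose i : ℝ) * p ^ i * (1 - p) ^ (k - i) * (1 - p ^ i) ^ (n - 1) := by
  let R (j : ℕ) (ω : Ω) (m : Fin k) : ℝ := X j m ω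
  have hrow j : iIndepFun (fun m : Fin k => X j m) P :=
    hindep.precomp (g := fun m : Fin k => (j, m.val)) fun _ _ h => Fin.ext (Prod.ext_iff.1 h).2
  have hp1' j (m : Fin k) : P.real (X j m ⁻¹' {1}) = p := by
    change (P {ω | X j m ω = 1}).toReal = p
    rw [hp1, ENNReal.toReal_ofReal hp.1.le]
  have hterm (S : Finset (Fin k)) :
      P.real (R 0 ⁻¹' {(S : Set (Fin k)).indicator 1})
        * ∏ j ∈ Ico 1 n, (1 - P.real (R j ⁻¹' Set.Ici ((S : Set (Fin k)).indicator 1)))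
      = p ^ #S * (1 - p) ^ (k - #S) * (1 - p ^ #S) ^ (n - 1) := by
    rw [(hrow 0).measureReal_preimage_indicator (fun m => hmeas 0 m) (hval 0 ·) (hp1' 0),
      prod_congr rfl fun j _ => by
        rw [(hrow j).measureReal_preimage_Ici_indicator (hval j ·) (hp1' j)],
      prod_const, Nat.card_Ico, Fintype.card_fin]
  have hevent : {ω | IsParetoMax X k n 0 ω} = {ω | ∀ j ∈ Ico 1 n, ¬ R 0 ω ≤ R j ω} :=
    Set.ext fun _ => isParetoMax_zero_iff
  rw [← measureReal_def, hevent,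
    (iIndepFun_rows_fin hmeas hindep k).measureReal_forall_not_le_eq_sum
      (fun _ => measurableSet_Ici) (fun j => measurable_pi_lambda _ fun m => hmeas j m)
      (V := univ.image fun S : Finset (Fin k) => (S : Set (Fin k)).indicator 1)
      (fun ω => mem_image_univ_iff_mem_range.2
        (exists_finset_indicator_eq_of_zero_or_one (hval 0 · ω))) (by simp),
    sum_image fun S _ T _ h => coe_inj.1 (Set.indicator_one_inj ℝ h),
    sum_congr rfl fun S _ => hterm S,
    sum_finset_fin_apply_card k fun i => p ^ i * (1 - p) ^ (k - i) * (1 - p ^ i) ^ (n - 1)]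
  refine sum_congr rfl fun i _ => ?_
  ring

/-- for iid Bernoulli(p) coordinates, for all `k, n ≥ 1`,
`p_{k,n}^{(p)} = Σ_{i=0}^{k} C(k,i) pⁱ (1-p)^{k-i} (1 - pⁱ)^{n-1}`. -/
theorem stmt_13 {Ω : Type*} [MeasurableSpace Ω] (P : Measure Ω) [IsProbabilityMeasure P]
    (p : ℝ) (hp : p ∈ Set.Ioo (0 : ℝ) 1)
    (X : ℕ → ℕ → Ω → ℝ)
    (hmeas : ∀ i j, Measurable (X i j))
    (hindep : iIndepFun (fun q : ℕ × ℕ => X q.1 q.2) P)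
    (hval : ∀ i j ω, X i j ω = 0 ∨ X i j ω = 1)
    (hp1 : ∀ i j, P {ω | X i j ω = 1} = ENNReal.ofReal p)
    (k n : ℕ) (hk : 1 ≤ k) (hn : 1 ≤ n) :
    (P {ω | IsParetoMax X k n 0 ω}).toReal
      = ∑ i ∈ Finset.range (k + 1),
          (k.choose i : ℝ) * p ^ i * (1 - p) ^ (k - i) * (1 - p ^ i) ^ (n - 1) :=
  stmt_13_general P p hp X hmeas hindep hval hp1 k n
end

section
/- Let the coordinates be i.i.d. Bernoulli(p) random variables for some p ∈ (0,1) and let k ≥ 1 be fixed. Then the probability q_{k,n}^{(p)} that the first vector is a weak maximum converges to p^k as n → ∞. -/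
open MeasureTheory ProbabilityTheory Filter

/-- `X i` is a weak maximum, with respect to the coordinatewise product order, among
the sample `X 0, …, X (n-1)` of vectors of dimension `k`: no other vector of the sample
strictly dominates it (dominates weakly in all coordinates and strictly in at least one). -/
def IsWeakParetoMax {Ω : Type*} (X : ℕ → ℕ → Ω → ℝ) (k n i : ℕ) (ω : Ω) : Prop :=
  ∀ j < n, j ≠ i →
    ¬ ((∀ m < k, X i m ω ≤ X j m ω) ∧ (∃ m < k, X i m ω < X j m ω))

/-!
The event that row `j` consists of ones only has probability `p ^ k`, and these events are
independent across rows. If row `0` is all ones, no other row can strictly dominate it; if it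
is not, any all-ones row strictly dominates it. Hence the probability that row `0` is a weak
maximum lies between `p ^ k` and `p ^ k + (1 - p ^ k) ^ (n - 1)`.
-/

open Finset

def allOnes {Ω : Type*} (X : ℕ → ℕ → Ω → ℝ) (k j : ℕ) : Set Ω :=
  ⋂ m ∈ range k, {ω | X j m ω = 1}

section Deterministic

variable {Ω : Type*} {X : ℕ → ℕ → Ω → ℝ} {k : ℕ}

lemma mem_allOnes {j : ℕ} {ω : Ω} : ω ∈ allOnes X k j ↔ ∀ m < k, X j m ω = 1 := by
  simp [allOnes]

lemma allOnes_subset_isWeakParetoMax (hle : ∀ j m ω, X j m ω ≤ 1) (n i : ℕ) :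
    allOnes X k i ⊆ {ω | IsWeakParetoMax X k n i ω} := by
  intro ω hω j _ _ ⟨_, m, hm, hlt⟩
  exact (hle j m ω).not_gt (mem_allOnes.1 hω m hm ▸ hlt)

lemma setOf_isWeakParetoMax_subset (hval : ∀ j m ω, X j m ω = 0 ∨ X j m ω = 1) (n i : ℕ) :
    {ω | IsWeakParetoMax X k n i ω} ⊆
      allOnes X k i ∪ ⋂ j ∈ (range n).erase i, (allOnes X k j)ᶜ := by
  intro ω hω
  by_cases hi : ω ∈ allOnes X k i
  · exact Or.inl hi
  refine Or.inr (Set.mem_iInter₂.2 fun j hj hjω => ?_)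
  obtain ⟨hji, hjn⟩ := mem_erase.1 hj
  obtain ⟨m₀, hm₀, hzero⟩ : ∃ m < k, X i m ω = 0 := by
    by_contra! h
    exact hi (mem_allOnes.2 fun m hm => (hval i m ω).resolve_left (h m hm))
  have hone := mem_allOnes.1 hjω
  refine hω j (mem_range.1 hjn) hji ⟨fun m hm => ?_, m₀, hm₀, ?_⟩
  · rw [hone m hm]
    rcases hval i m ω with h | h <;> simp [h]
  · simp [hzero, hone m₀ hm₀]

end Deterministic

section Independence

variable {Ω : Type*} [MeasurableSpace Ω] {P : Measure Ω}

lemma ProbabilityTheory.iIndepFun.measure_biInter_setOf_eq_one {ι : Type*} {Y : ι → Ω → ℝ}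
    {p : ℝ} (hindep : iIndepFun Y P) (hp1 : ∀ q, P {ω | Y q ω = 1} = ENNReal.ofReal p) (hp : 0 ≤ p)
    (S : Finset ι) :
    P (⋂ q ∈ S, {ω | Y q ω = 1}) = ENNReal.ofReal (p ^ #S) := by
  rw [hindep.meas_biInter (s := fun q => {ω | Y q ω = 1})
    fun q _ => ⟨{1}, measurableSet_singleton 1, rfl⟩]
  simp only [hp1, prod_const, ENNReal.ofReal_pow hp]

lemma ProbabilityTheory.iIndepSet.measure_biInter_compl {ι : Type*} {D : ι → Set Ω}
    (h : iIndepSet D P) (s : Finset ι) : P (⋂ j ∈ s, (D j)ᶜ) = ∏ j ∈ s, P (D j)ᶜ :=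
  ((iIndepSet_iff_iIndep D P).1 h).meas_biInter fun j _ =>
    (MeasurableSpace.measurableSet_generateFrom (Set.mem_singleton (D j))).compl

end Independence

section Rows

variable {Ω : Type*} [MeasurableSpace Ω] {P : Measure Ω} {X : ℕ → ℕ → Ω → ℝ} {p : ℝ} {k : ℕ}

lemma measurableSet_allOnes (hmeas : ∀ i j, Measurable (X i j)) (j : ℕ) :
    MeasurableSet (allOnes X k j) :=
  Finset.measurableSet_biInter _ fun m _ => hmeas j m (measurableSet_singleton 1)

lemma measure_biInter_allOnes (hindep : iIndepFun (fun q : ℕ × ℕ => X q.1 q.2) P)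
    (hp1 : ∀ i j, P {ω | X i j ω = 1} = ENNReal.ofReal p) (hp : 0 ≤ p) (s : Finset ℕ) :
    P (⋂ j ∈ s, allOnes X k j) = ENNReal.ofReal ((p ^ k) ^ #s) := by
  have hrect : ⋂ j ∈ s, allOnes X k j = ⋂ q ∈ s ×ˢ range k, {ω | X q.1 q.2 ω = 1} := by
    ext ω
    simp only [allOnes, Set.mem_iInter, mem_product, and_imp, Prod.forall]
    exact ⟨fun h a b ha hb => h a ha b hb, fun h a ha b hb => h a b ha hb⟩
  rw [hrect, hindep.measure_biInter_setOf_eq_one (fun q => hp1 q.1 q.2) hp, card_product,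
    card_range, pow_mul']

lemma measure_allOnes (hindep : iIndepFun (fun q : ℕ × ℕ => X q.1 q.2) P)
    (hp1 : ∀ i j, P {ω | X i j ω = 1} = ENNReal.ofReal p) (hp : 0 ≤ p) (j : ℕ) :
    P (allOnes X k j) = ENNReal.ofReal (p ^ k) := by
  simpa using measure_biInter_allOnes (k := k) hindep hp1 hp {j}

lemma iIndepSet_allOnes (hmeas : ∀ i j, Measurable (X i j))
    (hindep : iIndepFun (fun q : ℕ × ℕ => X q.1 q.2) P)
    (hp1 : ∀ i j, P {ω | X i j ω = 1} = ENNReal.ofReal p) (hp : 0 ≤ p) :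
    iIndepSet (allOnes X k) P := by
  refine (iIndepSet_iff_meas_biInter (measurableSet_allOnes hmeas)).2 fun s => ?_
  simp only [measure_biInter_allOnes hindep hp1 hp, measure_allOnes hindep hp1 hp, prod_const,
    ENNReal.ofReal_pow (pow_nonneg hp k)]

lemma measure_biInter_compl_allOnes [IsProbabilityMeasure P]
    (hmeas : ∀ i j, Measurable (X i j))
    (hindep : iIndepFun (fun q : ℕ × ℕ => X q.1 q.2) P)
    (hp1 : ∀ i j, P {ω | X i j ω = 1} = ENNReal.ofReal p) (hp₀ : 0 ≤ p) (hp_le : p ≤ 1)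
    (s : Finset ℕ) :
    P (⋂ j ∈ s, (allOnes X k j)ᶜ) = ENNReal.ofReal ((1 - p ^ k) ^ #s) := by
  rw [(iIndepSet_allOnes hmeas hindep hp1 hp₀).measure_biInter_compl]
  simp only [prob_compl_eq_one_sub (measurableSet_allOnes hmeas _),
    measure_allOnes hindep hp1 hp₀, prod_const, ← ENNReal.ofReal_one,
    ← ENNReal.ofReal_sub _ (pow_nonneg hp₀ k),
    ← ENNReal.ofReal_pow (sub_nonneg.2 (pow_le_one₀ hp₀ hp_le))]

lemma le_measure_isWeakParetoMax [IsFiniteMeasure P]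
    (hindep : iIndepFun (fun q : ℕ × ℕ => X q.1 q.2) P)
    (hp1 : ∀ i j, P {ω | X i j ω = 1} = ENNReal.ofReal p) (hp₀ : 0 ≤ p)
    (hle : ∀ j m ω, X j m ω ≤ 1) (n i : ℕ) :
    p ^ k ≤ (P {ω | IsWeakParetoMax X k n i ω}).toReal :=
  calc p ^ k = (P (allOnes X k i)).toReal := by
        rw [measure_allOnes hindep hp1 hp₀, ENNReal.toReal_ofReal (pow_nonneg hp₀ k)]
    _ ≤ _ := ENNReal.toReal_mono (measure_ne_top _ _)
        (measure_mono (allOnes_subset_isWeakParetoMax hle n i))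

lemma measure_isWeakParetoMax_le [IsProbabilityMeasure P] (hmeas : ∀ i j, Measurable (X i j))
    (hindep : iIndepFun (fun q : ℕ × ℕ => X q.1 q.2) P)
    (hp1 : ∀ i j, P {ω | X i j ω = 1} = ENNReal.ofReal p) (hp₀ : 0 ≤ p) (hp_le : p ≤ 1)
    (hval : ∀ j m ω, X j m ω = 0 ∨ X j m ω = 1) (n i : ℕ) :
    (P {ω | IsWeakParetoMax X k n i ω}).toReal ≤ p ^ k + (1 - p ^ k) ^ (n - 1) := by
  have hq₀ : 0 ≤ 1 - p ^ k := sub_nonneg.2 (pow_le_one₀ hp₀ hp_le)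
  have hq₁ : 1 - p ^ k ≤ 1 := sub_le_self _ (pow_nonneg hp₀ k)
  refine ENNReal.toReal_le_of_le_ofReal (by positivity) ?_
  calc P {ω | IsWeakParetoMax X k n i ω}
      ≤ P (allOnes X k i ∪ ⋂ j ∈ (range n).erase i, (allOnes X k j)ᶜ) :=
        measure_mono (setOf_isWeakParetoMax_subset hval n i)
    _ ≤ P (allOnes X k i) + P (⋂ j ∈ (range n).erase i, (allOnes X k j)ᶜ) :=
        measure_union_le _ _
    _ = ENNReal.ofReal (p ^ k + (1 - p ^ k) ^ #((range n).erase i)) := by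
        rw [measure_allOnes hindep hp1 hp₀,
          measure_biInter_compl_allOnes hmeas hindep hp1 hp₀ hp_le,
          ENNReal.ofReal_add (pow_nonneg hp₀ k) (by positivity)]
    _ ≤ ENNReal.ofReal (p ^ k + (1 - p ^ k) ^ (n - 1)) := by
        refine ENNReal.ofReal_le_ofReal (add_le_add_right (pow_le_pow_of_le_one hq₀ hq₁ ?_) _)
        simpa using pred_card_le_card_erase (s := range n) (a := i)

end Rows

theorem stmt_16_general {Ω : Type*} [MeasurableSpace Ω] (P : Measure Ω) [IsProbabilityMeasure P]
    (p : ℝ) (hp : p ∈ Set.Ioo (0 : ℝ) 1)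
    (X : ℕ → ℕ → Ω → ℝ)
    (hmeas : ∀ i j, Measurable (X i j))
    (hindep : iIndepFun (fun q : ℕ × ℕ => X q.1 q.2) P)
    (hval : ∀ i j ω, X i j ω = 0 ∨ X i j ω = 1)
    (hp1 : ∀ i j, P {ω | X i j ω = 1} = ENNReal.ofReal p)
    (k : ℕ) :
    Filter.Tendsto (fun n : ℕ => (P {ω | IsWeakParetoMax X k n 0 ω}).toReal)
      Filter.atTop (nhds (p ^ k)) := by
  obtain ⟨hp₀, hp_lt⟩ := hp
  have hle : ∀ j m ω, X j m ω ≤ 1 := fun j m ω =>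
    (hval j m ω).elim (fun h => h ▸ zero_le_one) le_of_eq
  have hgeom : Tendsto (fun n : ℕ => p ^ k + (1 - p ^ k) ^ (n - 1)) atTop (nhds (p ^ k)) := by
    have hq₀ : 0 ≤ 1 - p ^ k := sub_nonneg.2 (pow_le_one₀ hp₀.le hp_lt.le)
    have hq₁ : 1 - p ^ k < 1 := sub_lt_self _ (pow_pos hp₀ k)
    simpa using tendsto_const_nhds.add
      ((tendsto_pow_atTop_nhds_zero_of_lt_one hq₀ hq₁).comp (tendsto_sub_atTop_nat 1))
  exact tendsto_of_tendsto_of_tendsto_of_le_of_le tendsto_const_nhds hgeom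
    (fun n => le_measure_isWeakParetoMax hindep hp1 hp₀.le hle n 0)
    (fun n => measure_isWeakParetoMax_le hmeas hindep hp1 hp₀.le hp_lt.le hval n 0)

/-- for iid Bernoulli(p) coordinates and fixed `k ≥ 1`, the probability
`q_{k,n}^{(p)}` that the first vector is a weak maximum converges to `p^k` as `n → ∞`. -/
theorem stmt_16 {Ω : Type*} [MeasurableSpace Ω] (P : Measure Ω) [IsProbabilityMeasure P]
    (p : ℝ) (hp : p ∈ Set.Ioo (0 : ℝ) 1)
    (X : ℕ → ℕ → Ω → ℝ)
    (hmeas : ∀ i j, Measurable (X i j))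
    (hindep : iIndepFun (fun q : ℕ × ℕ => X q.1 q.2) P)
    (hval : ∀ i j ω, X i j ω = 0 ∨ X i j ω = 1)
    (hp1 : ∀ i j, P {ω | X i j ω = 1} = ENNReal.ofReal p)
    (k : ℕ) (hk : 1 ≤ k) :
    Filter.Tendsto (fun n : ℕ => (P {ω | IsWeakParetoMax X k n 0 ω}).toReal)
      Filter.atTop (nhds (p ^ k)) :=
  stmt_16_general P p hp X hmeas hindep hval hp1 k
end

section
/- Let the coordinates X_{ij} be i.i.d. Bernoulli(p) random variables for some p ∈ (0,1). Then for all integers k ≥ 1 and n ≥ 2, the probability that both the first and second vectors belong to the Pareto-front equals Σ over nonnegative integers a,d ≥ 0 and b,c ≥ 1 with a+b+c+d = k of the multinomial coefficient k!/(a! b! c! d!) times (1−p)^{2a} [p(1−p)]^{b+c} p^{2d} times [1 − p^d (p^b + p^c − p^{b+c})]^{n−2}. -/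
open MeasureTheory ProbabilityTheory Filter

/-!
Encode the sample as the Boolean matrix `ω ↦ (X i m ω = 1)`, whose entries are independent
Bernoulli(p). Rows `0` and `1` are both maximal iff they are incomparable and none of the other
`n - 2` rows dominates either of them; since the rows are independent, conditionally on rows
`u` and `v` this has probability `(1 - p^|u| - p^|v| + p^|u ⊔ v|) ^ (n - 2)` (inclusion–exclusion).
Everything depends on `(u, v)` only through the numbers `a, b, c, d` of columns in which
`(u m, v m)` is `(0,0), (1,0), (0,1), (1,1)`, and exactly `k! / (a! b! c! d!)` pairs of rows have
given counts.
-/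

open Finset
open scoped Nat

section FiberCard

variable {ι β : Type*} [Fintype ι] [Fintype β] [DecidableEq β]

def fiberCard (t : ι → β) (x : β) : ℕ := #{m | t m = x}

omit [Fintype β] in
lemma one_le_fiberCard_iff (t : ι → β) (x : β) : 1 ≤ fiberCard t x ↔ ∃ m, t m = x := by
  simp [fiberCard, one_le_card, filter_nonempty_iff]

lemma sum_fiberCard (t : ι → β) : ∑ x, fiberCard t x = Fintype.card ι := by
  simpa [fiberCard] using (card_eq_sum_card_fiberwise fun m (_ : m ∈ univ) => mem_univ (t m)).symm

lemma prod_comp_eq_prod_pow_fiberCard {M : Type*} [CommMonoid M] (t : ι → β) (g : β → M) :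
    ∏ m, g (t m) = ∏ x, g x ^ fiberCard t x := by
  rw [← prod_fiberwise' univ t g]
  exact prod_congr rfl fun x _ => prod_const _

lemma pow_card_filter_comp_eq_prod {M : Type*} [CommMonoid M] (t : ι → β) (P : β → Prop)
    [DecidablePred P] (a : M) :
    a ^ #{m | P (t m)} = ∏ x, (if P x then a else 1) ^ fiberCard t x := by
  rw [← prod_comp_eq_prod_pow_fiberCard, ← prod_const, prod_filter]

omit [DecidableEq β] in
lemma prod_X_pow_eq_monomial_equivFunOnFinite (g : β → ℕ) :
    ∏ x, (MvPolynomial.X x : MvPolynomial β ℕ) ^ g x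
      = MvPolynomial.monomial (Finsupp.equivFunOnFinite.symm g) 1 := by
  rw [MvPolynomial.monomial_eq, Finsupp.prod_fintype _ _ fun _ => pow_zero _]
  simp

/-- Compare the coefficients of `X^f` in `(∑ x, X x) ^ k = ∑ t : Fin k → β, ∏ m, X (t m)` and in
the multinomial theorem. -/
lemma card_fiberCard_eq_multinomial (k : ℕ) (f : β → ℕ) (hf : ∑ x, f x = k) :
    #{t : Fin k → β | fiberCard t = f} = Nat.multinomial univ f := by
  have key := Fintype.sum_pow (fun x => (MvPolynomial.X x : MvPolynomial β ℕ)) k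
  rw [sum_pow_eq_sum_piAntidiag] at key
  simp_rw [prod_comp_eq_prod_pow_fiberCard, prod_X_pow_eq_monomial_equivFunOnFinite] at key
  have hcoeff := congrArg (MvPolynomial.coeff (Finsupp.equivFunOnFinite.symm f)) key
  simp only [← map_natCast MvPolynomial.C, MvPolynomial.coeff_sum, MvPolynomial.coeff_C_mul,
    MvPolynomial.coeff_monomial, EmbeddingLike.apply_eq_iff_eq] at hcoeff
  simpa [sum_ite_eq', mem_piAntidiag, hf] using hcoeff.symm

lemma sum_comp_fiberCard {M : Type*} [AddCommMonoid M] (k : ℕ) (F : (β → ℕ) → M) :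
    ∑ t : Fin k → β, F (fiberCard t)
      = ∑ f ∈ piAntidiag univ k, Nat.multinomial univ f • F f := by
  have hmaps : ∀ t ∈ (univ : Finset (Fin k → β)), fiberCard t ∈ piAntidiag univ k := fun t _ =>
    mem_piAntidiag.2 ⟨by simpa using sum_fiberCard t, fun x _ => mem_univ x⟩
  rw [← sum_fiberwise_of_maps_to hmaps]
  refine sum_congr rfl fun f hf => ?_
  rw [sum_congr rfl fun t ht => congrArg F (mem_filter.1 ht).2, sum_const,
    card_fiberCard_eq_multinomial k f (by simpa using (mem_piAntidiag.1 hf).1)]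

end FiberCard

lemma Nat.cast_multinomial {α K : Type*} [Semifield K] [CharZero K] (s : Finset α)
    (f : α → ℕ) : (Nat.multinomial s f : K) = (∑ i ∈ s, f i)! / ∏ i ∈ s, ((f i)! : K) := by
  rw [Nat.multinomial, Nat.cast_div (Nat.prod_factorial_dvd_factorial_sum s f)
    (mod_cast (Nat.prod_factorial_pos s f).ne')]
  push_cast
  rfl

lemma sum_piAntidiag_boolProd {K : Type*} [Field K] [CharZero K] (k : ℕ) (G : ℕ → ℕ → ℕ → ℕ → K) :
    ∑ f ∈ piAntidiag univ k, Nat.multinomial univ f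
        • G (f (false, false)) (f (true, false)) (f (false, true)) (f (true, true))
      = ∑ a ∈ range (k + 1), ∑ b ∈ range (k + 1), ∑ c ∈ range (k + 1), ∑ d ∈ range (k + 1),
          if a + b + c + d = k then (k ! : K) / (a ! * b ! * c ! * d !) * G a b c d else 0 := by
  simp_rw [← sum_product', ← sum_filter]
  refine sum_nbij' (fun f => (f (false, false), f (true, false), f (false, true), f (true, true)))
    (fun q x => bif x.1 then (bif x.2 then q.2.2.2 else q.2.1) else (bif x.2 then q.2.2.1 else q.1))
    ?_ ?_ ?_ ?_ ?_
  · intro f hf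
    simp only [mem_piAntidiag, Fintype.sum_prod_type, Fintype.sum_bool] at hf
    simp only [mem_filter, mem_product, mem_range]
    omega
  · rintro ⟨a, b, c, d⟩ h
    simp only [mem_filter, mem_product, mem_range] at h
    simp [mem_piAntidiag, Fintype.sum_prod_type]
    omega
  · intro f _
    funext ⟨x, y⟩
    cases x <;> cases y <;> rfl
  · rintro ⟨a, b, c, d⟩ _
    rfl
  · intro f hf
    rw [mem_piAntidiag] at hf
    simp only [nsmul_eq_mul, Nat.cast_multinomial, Fintype.prod_prod_type, Fintype.prod_bool, hf.1]
    ring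

lemma Fintype.sum_fin_succ_pi {α M : Type*} [Fintype α] [AddCommMonoid M] {n : ℕ}
    (F : (Fin (n + 1) → α) → M) : ∑ c, F c = ∑ u, ∑ w : Fin n → α, F (Fin.cons u w) := by
  rw [← Fintype.sum_prod_type']
  exact (Fintype.sum_equiv (Fin.consEquiv fun _ => α) _ _ fun _ => rfl).symm

section Undominated

variable {ι α : Type*} [LE α]

def IsUndominated (c : ι → α) (i : ι) : Prop := ∀ j, j ≠ i → ¬c i ≤ c j

lemma isUndominated_cons_cons_iff {n : ℕ} (u v : α) (r : Fin n → α) :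
    IsUndominated (Fin.cons u (Fin.cons v r) : Fin (n + 2) → α) 0
        ∧ IsUndominated (Fin.cons u (Fin.cons v r) : Fin (n + 2) → α) 1
      ↔ ¬u ≤ v ∧ ¬v ≤ u ∧ ∀ j, ¬u ≤ r j ∧ ¬v ≤ r j := by
  simp only [IsUndominated, Fin.forall_fin_succ, ← Fin.succ_zero_eq_one, ne_eq, Fin.succ_inj,
    Fin.succ_ne_zero, (Fin.succ_ne_zero _).symm, Fin.cons_zero, Fin.cons_succ, forall_and,
    not_true, not_false_eq_true, false_imp_iff, forall_const, true_and]
  tauto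

open scoped Classical in
lemma sum_prod_of_isUndominated_zero_one {R : Type*} [Fintype α] [CommSemiring R]
    (W : α → R) (n : ℕ) :
    ∑ c : Fin (n + 2) → α with IsUndominated c 0 ∧ IsUndominated c 1, ∏ i, W (c i)
      = ∑ u, ∑ v, if ¬u ≤ v ∧ ¬v ≤ u
          then W u * W v * (∑ s with ¬u ≤ s ∧ ¬v ≤ s, W s) ^ n else 0 := by
  simp only [sum_filter, Fintype.sum_fin_succ_pi, isUndominated_cons_cons_iff, Fin.prod_univ_succ,
    Fin.cons_zero, Fin.cons_succ]
  refine sum_congr rfl fun u _ => sum_congr rfl fun v _ => ?_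
  split_ifs with huv
  · rw [Fintype.sum_pow, mul_sum]
    refine sum_congr rfl fun r _ => ?_
    rw [Fintype.prod_ite_zero]
    simp only [huv, not_false_eq_true, true_and]
    split_ifs <;> ring
  · exact sum_eq_zero fun r _ => if_neg fun h => huv ⟨h.1, h.2.1⟩

end Undominated

section Bernoulli

open scoped Classical

variable {R : Type*} [CommRing R] (p : R) {ι : Type*} [Fintype ι] [DecidableEq ι]

def bernoulliWeight (b : Bool) : R := if b then p else 1 - p

def bernoulliPiWeight (u : ι → Bool) : R := ∏ m, bernoulliWeight p (u m)

lemma sum_bernoulliPiWeight_of_le (u : ι → Bool) :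
    ∑ s with u ≤ s, bernoulliPiWeight p s = p ^ #{m | u m} := by
  have hfactor : ∀ s : ι → Bool, (if u ≤ s then bernoulliPiWeight p s else 0)
      = ∏ m, if u m ≤ s m then bernoulliWeight p (s m) else 0 := fun s => by
    simp only [prod_ite_zero, Pi.le_def, mem_univ, true_imp_iff]
    rfl
  rw [sum_filter, sum_congr rfl fun s _ => hfactor s,
    ← Fintype.prod_sum fun m b => if u m ≤ b then bernoulliWeight p b else 0, ← prod_const,
    prod_filter]
  refine prod_congr rfl fun m _ => ?_
  cases u m <;> simp [bernoulliWeight]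

lemma sum_bernoulliPiWeight : ∑ s : ι → Bool, bernoulliPiWeight p s = 1 := by
  simpa using sum_bernoulliPiWeight_of_le p (⊥ : ι → Bool)

lemma sum_bernoulliPiWeight_not_le_not_le (u v : ι → Bool) :
    ∑ s with ¬u ≤ s ∧ ¬v ≤ s, bernoulliPiWeight p s
      = 1 - p ^ #{m | u m} - p ^ #{m | v m} + p ^ #{m | (u ⊔ v) m} := by
  have hincl : ∀ s : ι → Bool, (if ¬u ≤ s ∧ ¬v ≤ s then bernoulliPiWeight p s else 0)
      = bernoulliPiWeight p s - (if u ≤ s then bernoulliPiWeight p s else 0)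
        - (if v ≤ s then bernoulliPiWeight p s else 0)
        + (if u ⊔ v ≤ s then bernoulliPiWeight p s else 0) := fun s => by
    rw [sup_le_iff]
    split_ifs <;> simp_all
  simp_rw [sum_filter, hincl, sum_add_distrib, sum_sub_distrib, ← sum_filter,
    sum_bernoulliPiWeight, sum_bernoulliPiWeight_of_le]

omit [DecidableEq ι] in
lemma not_le_iff_one_le_fiberCard (u v : ι → Bool) :
    ¬u ≤ v ↔ 1 ≤ fiberCard (fun m => (u m, v m)) (true, false) := by
  simp [one_le_fiberCard_iff, Pi.le_def, Bool.le_iff_imp]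

def paretoPairTerm (n a b c d : ℕ) : R :=
  if 1 ≤ b ∧ 1 ≤ c then
    (1 - p) ^ (2 * a) * (p * (1 - p)) ^ (b + c) * p ^ (2 * d)
      * (1 - p ^ d * (p ^ b + p ^ c - p ^ (b + c))) ^ n
  else 0

lemma ite_incomparable_eq_paretoPairTerm (n : ℕ) (u v : ι → Bool) :
    (if ¬u ≤ v ∧ ¬v ≤ u then
      bernoulliPiWeight p u * bernoulliPiWeight p v
        * (∑ s with ¬u ≤ s ∧ ¬v ≤ s, bernoulliPiWeight p s) ^ n
      else 0)
      = paretoPairTerm p n (fiberCard (fun m => (u m, v m)) (false, false))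
          (fiberCard (fun m => (u m, v m)) (true, false))
          (fiberCard (fun m => (u m, v m)) (false, true))
          (fiberCard (fun m => (u m, v m)) (true, true)) := by
  set t : ι → Bool × Bool := fun m => (u m, v m)
  have hvu : fiberCard (fun m => (v m, u m)) (true, false) = fiberCard t (false, true) := by
    simp only [fiberCard, t, Prod.mk.injEq, and_comm]
  have hW : bernoulliPiWeight p u * bernoulliPiWeight p v
      = ∏ x, (bernoulliWeight p x.1 * bernoulliWeight p x.2) ^ fiberCard t x := by
    rw [bernoulliPiWeight, bernoulliPiWeight, ← prod_mul_distrib]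
    exact prod_comp_eq_prod_pow_fiberCard t fun x => bernoulliWeight p x.1 * bernoulliWeight p x.2
  have hu : p ^ #{m | u m} = ∏ x, (if x.1 then p else 1) ^ fiberCard t x :=
    pow_card_filter_comp_eq_prod t (fun x => x.1 = true) p
  have hv : p ^ #{m | v m} = ∏ x, (if x.2 then p else 1) ^ fiberCard t x :=
    pow_card_filter_comp_eq_prod t (fun x => x.2 = true) p
  have huv : p ^ #{m | (u ⊔ v) m} = ∏ x, (if x.1 || x.2 then p else 1) ^ fiberCard t x :=
    pow_card_filter_comp_eq_prod t (fun x => (x.1 || x.2) = true) p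
  rw [sum_bernoulliPiWeight_not_le_not_le, hW, hu, hv, huv]
  simp only [paretoPairTerm, not_le_iff_one_le_fiberCard, hvu]
  split_ifs
  · simp [Fintype.prod_prod_type, bernoulliWeight]
    generalize 1 - p = q
    ring
  · rfl

lemma sum_incomparable_eq_sum_paretoPairTerm (p : ℝ) (n k : ℕ) :
    ∑ u : Fin k → Bool, ∑ v : Fin k → Bool, (if ¬u ≤ v ∧ ¬v ≤ u then
        bernoulliPiWeight p u * bernoulliPiWeight p v
          * (∑ s with ¬u ≤ s ∧ ¬v ≤ s, bernoulliPiWeight p s) ^ n else 0)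
      = ∑ a ∈ range (k + 1), ∑ b ∈ range (k + 1), ∑ c ∈ range (k + 1), ∑ d ∈ range (k + 1),
          if a + b + c + d = k then
            (k ! : ℝ) / (a ! * b ! * c ! * d !) * paretoPairTerm p n a b c d
          else 0 := by
  let F : (Bool × Bool → ℕ) → ℝ := fun f => paretoPairTerm p n (f (false, false))
    (f (true, false)) (f (false, true)) (f (true, true))
  simp_rw [ite_incomparable_eq_paretoPairTerm]
  rw [← Fintype.sum_prod_type']
  refine (Fintype.sum_equiv (Equiv.arrowProdEquivProdArrow _ _ _).symm _
    (fun t => F (fiberCard t)) fun _ => rfl).trans ?_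
  rw [sum_comp_fiberCard k F, sum_piAntidiag_boolProd]

end Bernoulli

section BitMatrix

variable {Ω : Type*} (X : ℕ → ℕ → Ω → ℝ)

noncomputable def bitMatrix (n k : ℕ) (ω : Ω) : Fin n → Fin k → Bool := fun i m => X i m ω = 1

lemma le_iff_decide_le {x y : ℝ} (hx : x = 0 ∨ x = 1) (hy : y = 0 ∨ y = 1) :
    x ≤ y ↔ decide (x = 1) ≤ decide (y = 1) := by
  rcases hx with rfl | rfl <;> rcases hy with rfl | rfl <;> norm_num

lemma isParetoMax_iff_isUndominated (hval : ∀ i j ω, X i j ω = 0 ∨ X i j ω = 1) {n : ℕ} (k : ℕ)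
    (i : Fin n) (ω : Ω) : IsParetoMax X k n i ω ↔ IsUndominated (bitMatrix X n k ω) i := by
  simp only [IsParetoMax, IsUndominated, Fin.forall_iff, Pi.le_def, bitMatrix,
    le_iff_decide_le (hval _ _ ω) (hval _ _ ω), ne_eq, Fin.ext_iff]

variable [MeasurableSpace Ω]

lemma measurable_bitMatrix (hmeas : ∀ i j, Measurable (X i j)) (n k : ℕ) :
    Measurable (bitMatrix X n k) :=
  measurable_pi_lambda _ fun i => measurable_pi_lambda _ fun m =>
    measurable_to_bool <| by
      simpa [bitMatrix, Set.preimage] using hmeas i m (measurableSet_singleton 1)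

lemma measureReal_bitMatrix_preimage_singleton (P : Measure Ω) [IsProbabilityMeasure P] {p : ℝ}
    (hp : 0 ≤ p) (hmeas : ∀ i j, Measurable (X i j))
    (hindep : iIndepFun (fun q : ℕ × ℕ => X q.1 q.2) P)
    (hp1 : ∀ i j, P {ω | X i j ω = 1} = ENNReal.ofReal p) {n k : ℕ} (c : Fin n → Fin k → Bool) :
    P.real (bitMatrix X n k ⁻¹' {c}) = ∏ i, bernoulliPiWeight p (c i) := by
  set Y : Fin n × Fin k → Ω → Bool := fun q ω => bitMatrix X n k ω q.1 q.2
  have hinj : Function.Injective fun q : Fin n × Fin k => ((q.1 : ℕ), (q.2 : ℕ)) :=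
    fun q q' h => by simpa [Prod.ext_iff, Fin.ext_iff] using h
  have hY : iIndepFun Y P := (hindep.precomp hinj).comp (fun _ x => decide (x = 1)) fun _ =>
    measurable_to_bool (by simp [Set.preimage])
  have htrue : ∀ q, Y q ⁻¹' {true} = X q.1 q.2 ⁻¹' {1} := fun q => by ext; simp [Y, bitMatrix]
  have hone : ∀ i j, P.real (X i j ⁻¹' {1}) = p := fun i j => by
    simp [measureReal_def, Set.preimage, hp1, hp]
  have hmarg : ∀ q b, P.real (Y q ⁻¹' {b}) = bernoulliWeight p b := by
    rintro q (_ | _)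
    · rw [show ({false} : Set Bool) = {true}ᶜ by simp [Bool.compl_singleton],
        Set.preimage_compl, htrue, probReal_compl_eq_one_sub (hmeas _ _ (measurableSet_singleton 1)), hone]
      rfl
    · rw [htrue, hone]
      rfl
  have hset : bitMatrix X n k ⁻¹' {c} = ⋂ q, Y q ⁻¹' {c q.1 q.2} := by
    ext ω
    simp [Y, funext_iff]
  rw [hset, measureReal_def, hY.meas_iInter fun q => ⟨{c q.1 q.2}, measurableSet_singleton _, rfl⟩,
    ENNReal.toReal_prod, Fintype.prod_prod_type]
  simp_rw [← measureReal_def, hmarg]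
  rfl

end BitMatrix

theorem stmt_17_general {Ω : Type*} [MeasurableSpace Ω] (P : Measure Ω) [IsProbabilityMeasure P]
    (p : ℝ) (hp : p ∈ Set.Ioo (0 : ℝ) 1)
    (X : ℕ → ℕ → Ω → ℝ)
    (hmeas : ∀ i j, Measurable (X i j))
    (hindep : iIndepFun (fun q : ℕ × ℕ => X q.1 q.2) P)
    (hval : ∀ i j ω, X i j ω = 0 ∨ X i j ω = 1)
    (hp1 : ∀ i j, P {ω | X i j ω = 1} = ENNReal.ofReal p)
    (k n : ℕ) (hn : 2 ≤ n) :
    (P {ω | IsParetoMax X k n 0 ω ∧ IsParetoMax X k n 1 ω}).toReal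
      = ∑ a ∈ Finset.range (k + 1), ∑ b ∈ Finset.range (k + 1),
          ∑ c ∈ Finset.range (k + 1), ∑ d ∈ Finset.range (k + 1),
          if a + b + c + d = k ∧ 1 ≤ b ∧ 1 ≤ c then
            ((k.factorial : ℝ)
                / (a.factorial * b.factorial * c.factorial * d.factorial))
              * ((1 - p) ^ (2 * a) * (p * (1 - p)) ^ (b + c) * p ^ (2 * d))
              * (1 - p ^ d * (p ^ b + p ^ c - p ^ (b + c))) ^ (n - 2)
          else 0 := by
  classical
  obtain ⟨n, rfl⟩ : ∃ m, n = m + 2 := ⟨n - 2, by omega⟩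
  have hevent : {ω | IsParetoMax X k (n + 2) 0 ω ∧ IsParetoMax X k (n + 2) 1 ω}
      = bitMatrix X (n + 2) k ⁻¹'
          ↑({c | IsUndominated c 0 ∧ IsUndominated c 1} : Finset (Fin (n + 2) → Fin k → Bool)) := by
    ext ω
    simp [← isParetoMax_iff_isUndominated X hval]
  rw [← measureReal_def, hevent, ← sum_measureReal_preimage_singleton _
    fun c _ => measurable_bitMatrix X hmeas _ _ (measurableSet_singleton c)]
  simp_rw [measureReal_bitMatrix_preimage_singleton X P hp.1.le hmeas hindep hp1]
  rw [sum_prod_of_isUndominated_zero_one, sum_incomparable_eq_sum_paretoPairTerm]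
  simp only [paretoPairTerm, ite_and, mul_ite, mul_zero, mul_assoc, Nat.add_sub_cancel]

/-- for iid Bernoulli(p) coordinates, for all `k ≥ 1` and `n ≥ 2`, the
probability that both the first and second vectors belong to the Pareto front equals
`Σ_{a,d ≥ 0, b,c ≥ 1, a+b+c+d = k} k!/(a! b! c! d!) (1-p)^{2a} [p(1-p)]^{b+c} p^{2d}
  [1 - p^d (p^b + p^c - p^{b+c})]^{n-2}`. -/
theorem stmt_17 {Ω : Type*} [MeasurableSpace Ω] (P : Measure Ω) [IsProbabilityMeasure P]
    (p : ℝ) (hp : p ∈ Set.Ioo (0 : ℝ) 1)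
    (X : ℕ → ℕ → Ω → ℝ)
    (hmeas : ∀ i j, Measurable (X i j))
    (hindep : iIndepFun (fun q : ℕ × ℕ => X q.1 q.2) P)
    (hval : ∀ i j ω, X i j ω = 0 ∨ X i j ω = 1)
    (hp1 : ∀ i j, P {ω | X i j ω = 1} = ENNReal.ofReal p)
    (k n : ℕ) (hk : 1 ≤ k) (hn : 2 ≤ n) :
    (P {ω | IsParetoMax X k n 0 ω ∧ IsParetoMax X k n 1 ω}).toReal
      = ∑ a ∈ Finset.range (k + 1), ∑ b ∈ Finset.range (k + 1),
          ∑ c ∈ Finset.range (k + 1), ∑ d ∈ Finset.range (k + 1),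
          if a + b + c + d = k ∧ 1 ≤ b ∧ 1 ≤ c then
            ((k.factorial : ℝ)
                / (a.factorial * b.factorial * c.factorial * d.factorial))
              * ((1 - p) ^ (2 * a) * (p * (1 - p)) ^ (b + c) * p ^ (2 * d))
              * (1 - p ^ d * (p ^ b + p ^ c - p ^ (b + c))) ^ (n - 2)
          else 0 :=
  stmt_17_general P p hp X hmeas hindep hval hp1 k n hn
end
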